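/- Let G be the group ⟨a, b | a b a b^{-1} a^{-1} b a b = b a b a^{-1} b^{-1} a b a, (b a b^{-1} a^{-1} b^{-1} a b a^{-1})^n a^m = 1⟩ with m ≥ 2n ≥ 2. If a ≠ 1 in G, then a is a generalized torsion element of G. -/

import Mathlib

/-- A generalized torsion element: a non-identity element some non-empty finite
product of whose conjugates is the identity. -/
def IsGenTorsion {G : Type*} [Group G] (g : G) : Prop :=
  g ≠ 1 ∧ ∃ l : List G, l ≠ [] ∧ (∀ x ∈ l, ∃ v : G, x = v⁻¹ * g * v) ∧ l.prod = 1

/-- The two relators of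
⟨a, b | a b a b⁻¹ a⁻¹ b a b = b a b a⁻¹ b⁻¹ a b a, (b a b⁻¹ a⁻¹ b⁻¹ a b a⁻¹)ⁿ aᵐ = 1⟩,
with `a = FreeGroup.of 0`, `b = FreeGroup.of 1`. -/
def whiteheadRels (m n : ℕ) : Set (FreeGroup (Fin 2)) :=
  let a : FreeGroup (Fin 2) := FreeGroup.of 0
  let b : FreeGroup (Fin 2) := FreeGroup.of 1
  { (a * b * a * b⁻¹ * a⁻¹ * b * a * b) * (b * a * b * a⁻¹ * b⁻¹ * a * b * a)⁻¹,
    (b * a * b⁻¹ * a⁻¹ * b⁻¹ * a * b * a⁻¹) ^ n * a ^ m }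

/-!
Write `w = b a b⁻¹ a⁻¹ b⁻¹ a b a⁻¹`. The element `w a² = (b a b⁻¹) · ((b a)⁻¹ a (b a))` is a
product of two conjugates of `a`, so it lies in the subsemigroup `P` generated by the
conjugates of `a`. Since `P` is closed under conjugation, `wᵏ⁺¹ a²⁽ᵏ⁺¹⁾ = (wᵏ a²ᵏ) · a⁻²ᵏ (w a²) a²ᵏ`
shows inductively that `wⁿ a²ⁿ ∈ P`, hence `1 = wⁿ a²ⁿ · aᵐ⁻²ⁿ ∈ P`: the identity is a non-empty
product of conjugates of `a`.
-/

open Subsemigroup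

section Monoid

variable {M : Type*} [Monoid M]

theorem Subsemigroup.exists_list_of_mem_closure {s : Set M} {x : M}
    (hx : x ∈ closure s) : ∃ l : List M, l ≠ [] ∧ (∀ y ∈ l, y ∈ s) ∧ l.prod = x := by
  induction hx using closure_induction with
  | mem x hx => exact ⟨[x], List.cons_ne_nil _ _, by simpa using hx, by simp⟩
  | mul x y _ _ hx hy =>
    obtain ⟨l₁, hl₁, hs₁, rfl⟩ := hx
    obtain ⟨l₂, -, hs₂, rfl⟩ := hy
    refine ⟨l₁ ++ l₂, by simp [hl₁], ?_, List.prod_append⟩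
    simpa only [List.mem_append, or_imp, forall_and] using ⟨hs₁, hs₂⟩

theorem Subsemigroup.mul_pow_mem {S : Subsemigroup M} {x y : M} (hx : x ∈ S) (hy : y ∈ S)
    (j : ℕ) : x * y ^ j ∈ S := by
  induction j with
  | zero => simpa using hx
  | succ j ih => simpa only [pow_succ, ← mul_assoc] using mul_mem ih hy

end Monoid

section Group

variable {G : Type*} [Group G]

theorem Subsemigroup.pow_mul_pow_mem {S : Subsemigroup G} (hS : ∀ u, ∀ s ∈ S, u * s * u⁻¹ ∈ S)
    {x y : G} (hxy : x * y ∈ S) {k : ℕ} (hk : 1 ≤ k) : x ^ k * y ^ k ∈ S := by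
  induction k, hk using Nat.le_induction with
  | base => simpa using hxy
  | succ k _ ih =>
    have key : x ^ (k + 1) * y ^ (k + 1)
        = x ^ k * y ^ k * ((y ^ k)⁻¹ * (x * y) * (y ^ k)⁻¹⁻¹) := by
      group
    rw [key]
    exact mul_mem ih (hS _ _ hxy)

theorem conj_mem_closure_conjugatesOf {g : G} (u : G) {x : G}
    (hx : x ∈ closure (conjugatesOf g)) : u * x * u⁻¹ ∈ closure (conjugatesOf g) := by
  induction hx using closure_induction with
  | mem x hx => exact subset_closure (hx.trans (isConj_iff.mpr ⟨u, rfl⟩))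
  | mul x y _ _ hx hy => simpa only [mul_assoc, inv_mul_cancel_left] using mul_mem hx hy

theorem IsGenTorsion.of_one_mem_closure_conjugatesOf {g : G} (hg : g ≠ 1)
    (h : (1 : G) ∈ closure (conjugatesOf g)) : IsGenTorsion g := by
  obtain ⟨l, hl, hconj, hprod⟩ := exists_list_of_mem_closure h
  refine ⟨hg, l, hl, fun x hx => ?_, hprod⟩
  obtain ⟨c, rfl⟩ := isConj_iff.mp (hconj x hx)
  exact ⟨c⁻¹, by rw [inv_inv]⟩

theorem whitehead_mul_sq_mem_closure_conjugatesOf (a b : G) :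
    b * a * b⁻¹ * a⁻¹ * b⁻¹ * a * b * a⁻¹ * a ^ 2 ∈ closure (conjugatesOf a) := by
  have key : b * a * b⁻¹ * a⁻¹ * b⁻¹ * a * b * a⁻¹ * a ^ 2
      = (b * a * b⁻¹) * ((b * a)⁻¹ * a * (b * a)⁻¹⁻¹) := by
    group
  rw [key]
  exact mul_mem (subset_closure (isConj_iff.mpr ⟨b, rfl⟩))
    (subset_closure (isConj_iff.mpr ⟨_, rfl⟩))

theorem isGenTorsion_of_whitehead_relator_eq_one {a b : G} {m n : ℕ} (hn : 1 ≤ n)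
    (hm : 2 * n ≤ m) (ha : a ≠ 1)
    (hrel : (b * a * b⁻¹ * a⁻¹ * b⁻¹ * a * b * a⁻¹) ^ n * a ^ m = 1) : IsGenTorsion a := by
  refine .of_one_mem_closure_conjugatesOf ha ?_
  have hpow := pow_mul_pow_mem (fun u _ ↦ conj_mem_closure_conjugatesOf u)
    (whitehead_mul_sq_mem_closure_conjugatesOf a b) hn
  rw [← hrel, ← Nat.add_sub_cancel' hm, pow_add, ← mul_assoc, pow_mul]
  exact mul_pow_mem hpow (subset_closure (IsConj.refl a)) _

end Group

theorem whiteheadRels_relator_eq_one (m n : ℕ) :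
    let a : PresentedGroup (whiteheadRels m n) := .of 0
    let b : PresentedGroup (whiteheadRels m n) := .of 1
    (b * a * b⁻¹ * a⁻¹ * b⁻¹ * a * b * a⁻¹) ^ n * a ^ m = 1 :=
  PresentedGroup.one_of_mem (Set.mem_insert_of_mem _ (Set.mem_singleton _))

/-- If m ≥ 2n ≥ 2 and a ≠ 1 in G, then a is a generalized torsion element of G. -/
theorem whitehead_filling_genTorsion (m n : ℕ) (hn : 1 ≤ n) (hm : 2 * n ≤ m)
    (ha : (PresentedGroup.of 0 : PresentedGroup (whiteheadRels m n)) ≠ 1) :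
    IsGenTorsion (PresentedGroup.of 0 : PresentedGroup (whiteheadRels m n)) :=
  isGenTorsion_of_whitehead_relator_eq_one hn hm ha (whiteheadRels_relator_eq_one m n)
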